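/- arXiv:2502.02084 — 5 statements merged into one kernel-verified Lean document; each statement's English description precedes it below -/
import Mathlib

section
/- Let m ≥ 0, n ≥ 1, μ, ν ≥ 0 with δ = (μ-1)² - 4ν² > 0, and let β ∈ ℝ. Define z(t,x) = (m+1)²|x|²/t^{2(m+1)} and Φ_β(t,x) = t^{1-β} ψ(z(t,x)) for a C² function ψ on [0,1). Then Φ_β satisfies ∂²_t Φ - t^{2m} Δ_x Φ - ∂_t((μ/t)Φ) + (ν²/t²)Φ = 0 for all t ≥ 1 and |x| < t^{m+1}/(m+1) if and only if ψ satisfies the hypergeometric-type ODE z(1-z)ψ''(z) + [n/2 - ((β-1)/(m+1) + 1/(2(m+1)) + μ/(2(m+1)) + 1)z]ψ'(z) - (β(β+μ-1)+ν²)/(4(m+1)²) ψ(z) = 0 on (0,1). -/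
/-!
Write `z = (m+1)²|x|²/t^{2(m+1)}`. Every time derivative of `s ↦ s^p χ(C/s^γ)` is again of this
form, and the Laplacian of the radial function `ψ(c|y|²)` is `c (4c|y|² ψ'' + 2n ψ')`; collecting
terms, the conjugate operator applied to `Φ_β` is `-4(m+1)² t^{-1-β}` times the hypergeometric
operator applied to `ψ` at `z`. As `(t, x)` ranges over `t ≥ 1`, `|x| < t^{m+1}/(m+1)`, the
variable `z` covers `[0, 1)` (already at `t = 1`), and at `z = 0` the ODE holds by continuity of
`ψ, ψ', ψ''` up to the endpoint.
-/

open Real Set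

/-- The Laplacian of a function on `ℝⁿ`, as the sum of second partial derivatives. -/
noncomputable def lap {n : ℕ} (f : EuclideanSpace ℝ (Fin n) → ℝ)
    (x : EuclideanSpace ℝ (Fin n)) : ℝ :=
  ∑ i : Fin n, iteratedFDeriv ℝ 2 f x ![EuclideanSpace.single i 1, EuclideanSpace.single i 1]

open Filter Topology

theorem derivWithin_derivWithin_of_mem_nhds {𝕜 F : Type*} [NontriviallyNormedField 𝕜]
    [NormedAddCommGroup F] [NormedSpace 𝕜 F] {f : 𝕜 → F} {s : Set 𝕜} {x : 𝕜} (h : s ∈ 𝓝 x) :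
    derivWithin (derivWithin f s) s x = deriv (deriv f) x := by
  rw [derivWithin_of_mem_nhds h]
  refine EventuallyEq.deriv_eq ?_
  filter_upwards [eventually_mem_nhds_iff.2 h] with y hy using derivWithin_of_mem_nhds hy

theorem lap_eq_sum_of_hasFDerivAt {n : ℕ} {f : EuclideanSpace ℝ (Fin n) → ℝ}
    {g : EuclideanSpace ℝ (Fin n) → EuclideanSpace ℝ (Fin n) →L[ℝ] ℝ}
    {D : EuclideanSpace ℝ (Fin n) →L[ℝ] EuclideanSpace ℝ (Fin n) →L[ℝ] ℝ}
    {x : EuclideanSpace ℝ (Fin n)}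
    (hf : fderiv ℝ f =ᶠ[𝓝 x] g) (hg : HasFDerivAt g D x) :
    lap f x = ∑ i, D (EuclideanSpace.single i 1) (EuclideanSpace.single i 1) := by
  simp [lap, iteratedFDeriv_two_apply, hf.fderiv_eq, hg.fderiv]

theorem eventually_mul_norm_sq_mem_Ico {E : Type*} [SeminormedAddCommGroup E] {c : ℝ} (hc : 0 ≤ c)
    {x : E} (hx : c * ‖x‖ ^ 2 < 1) : ∀ᶠ y in 𝓝 x, c * ‖y‖ ^ 2 ∈ Ico (0 : ℝ) 1 :=
  ((continuous_const.mul (continuous_norm.pow 2)).continuousAt.eventually (gt_mem_nhds hx)).mono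
    fun _ hy => ⟨by positivity, hy⟩

section Radial

variable {E : Type*} [NormedAddCommGroup E] [InnerProductSpace ℝ E] {ψ ψ₁ ψ₂ : ℝ → ℝ} {c : ℝ}

variable (E) in
/-- `innerSL ℝ`, typed as a real bilinear map (its type is conjugate-linear in the first slot),
so that the product rule for `HasFDerivAt` applies to `y ↦ k y • innerSL ℝ y`. -/
noncomputable def innerBilin : E →L[ℝ] E →L[ℝ] ℝ := innerSL ℝ

@[simp]
theorem innerBilin_apply_apply (v w : E) : innerBilin E v w = inner ℝ v w := rfl

theorem hasFDerivAt_mul_norm_sq (y : E) :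
    HasFDerivAt (fun v : E => c * ‖v‖ ^ 2) ((2 * c) • innerBilin E y) y :=
  ((hasStrictFDerivAt_norm_sq y).hasFDerivAt.const_mul c).congr_fderiv <| by
    ext v
    simp only [smul_apply, coe_innerSL_apply, nsmul_eq_mul, Nat.cast_ofNat, smul_eq_mul,
      innerBilin_apply_apply]
    ring

theorem hasFDerivAt_comp_mul_norm_sq
    (hψ : ∀ w ∈ Ico (0 : ℝ) 1, HasDerivWithinAt ψ (ψ₁ w) (Ico 0 1) w) (hc : 0 ≤ c) {x : E}
    (hx : c * ‖x‖ ^ 2 < 1) :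
    HasFDerivAt (fun y => ψ (c * ‖y‖ ^ 2)) ((2 * c * ψ₁ (c * ‖x‖ ^ 2)) • innerBilin E x) x := by
  refine ((hψ _ ⟨by positivity, hx⟩).comp_hasFDerivAt x (hasFDerivAt_mul_norm_sq x)
    (eventually_mul_norm_sq_mem_Ico hc hx)).congr_fderiv ?_
  rw [smul_smul, mul_comm]

theorem hasFDerivAt_gradient_comp_mul_norm_sq
    (hψ₁ : ∀ w ∈ Ico (0 : ℝ) 1, HasDerivWithinAt ψ₁ (ψ₂ w) (Ico 0 1) w) (hc : 0 ≤ c) {x : E}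
    (hx : c * ‖x‖ ^ 2 < 1) :
    HasFDerivAt (fun y : E => (2 * c * ψ₁ (c * ‖y‖ ^ 2)) • innerBilin E y)
      ((2 * c * ψ₁ (c * ‖x‖ ^ 2)) • innerBilin E +
        ((4 * c ^ 2 * ψ₂ (c * ‖x‖ ^ 2)) • innerBilin E x).smulRight (innerBilin E x)) x := by
  have hk := (hasFDerivAt_comp_mul_norm_sq hψ₁ hc hx).const_mul (2 * c)
  refine (hk.smul (innerBilin E).hasFDerivAt).congr_fderiv ?_
  ext v w
  simp only [add_apply, smul_apply, ContinuousLinearMap.smulRight_apply, innerBilin_apply_apply,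
    smul_eq_mul]
  ring

end Radial

theorem lap_comp_mul_norm_sq {n : ℕ} {ψ ψ₁ ψ₂ : ℝ → ℝ}
    (hψ : ∀ w ∈ Ico (0 : ℝ) 1, HasDerivWithinAt ψ (ψ₁ w) (Ico 0 1) w)
    (hψ₁ : ∀ w ∈ Ico (0 : ℝ) 1, HasDerivWithinAt ψ₁ (ψ₂ w) (Ico 0 1) w)
    {c : ℝ} (hc : 0 ≤ c) {x : EuclideanSpace ℝ (Fin n)} (hx : c * ‖x‖ ^ 2 < 1) :
    lap (fun y => ψ (c * ‖y‖ ^ 2)) x =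
      c * (4 * (c * ‖x‖ ^ 2) * ψ₂ (c * ‖x‖ ^ 2) + 2 * n * ψ₁ (c * ‖x‖ ^ 2)) := by
  have hfderiv : fderiv ℝ (fun y => ψ (c * ‖y‖ ^ 2)) =ᶠ[𝓝 x]
      fun y => (2 * c * ψ₁ (c * ‖y‖ ^ 2)) • innerBilin _ y := by
    filter_upwards [eventually_mul_norm_sq_mem_Ico hc hx] with y hy
    exact (hasFDerivAt_comp_mul_norm_sq hψ hc hy.2).fderiv
  rw [lap_eq_sum_of_hasFDerivAt hfderiv (hasFDerivAt_gradient_comp_mul_norm_sq hψ₁ hc hx)]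
  simp only [add_apply, smul_apply, ContinuousLinearMap.smulRight_apply, innerBilin_apply_apply,
    EuclideanSpace.inner_single_right, ringHom_apply, one_mul, smul_eq_mul,
    inner_self_eq_norm_sq_to_K, PiLp.norm_single, norm_one, one_pow, mul_one, Finset.sum_add_distrib, Finset.sum_const,
    Finset.card_univ, Fintype.card_fin, nsmul_eq_mul]
  simp only [mul_assoc, ← Finset.mul_sum, ← pow_two, ← EuclideanSpace.real_norm_sq_eq]
  ring

theorem hasDerivAt_const_div_rpow (C γ : ℝ) {t : ℝ} (ht : 0 < t) :
    HasDerivAt (fun s : ℝ => C / s ^ γ) (-γ * (C / t ^ γ) / t) t := by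
  have := (hasDerivAt_const t C).div (Real.hasDerivAt_rpow_const (p := γ) (Or.inl ht.ne'))
    (Real.rpow_pos_of_pos ht γ).ne'
  refine this.congr_deriv ?_
  rw [Real.rpow_sub_one ht.ne']
  field_simp
  ring

theorem eventually_pos_and_const_div_rpow_lt_one {C γ t : ℝ} (ht : 0 < t) (hz : C / t ^ γ < 1) :
    ∀ᶠ s in 𝓝 t, 0 < s ∧ C / s ^ γ < 1 :=
  (eventually_gt_nhds ht).and
    ((hasDerivAt_const_div_rpow C γ ht).continuousAt.eventually (gt_mem_nhds hz))

theorem hasDerivAt_rpow_mul_comp_div_rpow {χ χ' : ℝ → ℝ}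
    (hχ : ∀ w ∈ Ico (0 : ℝ) 1, HasDerivWithinAt χ (χ' w) (Ico 0 1) w) (p γ : ℝ) {C t : ℝ}
    (hC : 0 ≤ C) (ht : 0 < t) (hz : C / t ^ γ < 1) :
    HasDerivAt (fun s => s ^ p * χ (C / s ^ γ))
      (t ^ (p - 1) * (p * χ (C / t ^ γ) - γ * (C / t ^ γ) * χ' (C / t ^ γ))) t := by
  have hmem : ∀ᶠ s in 𝓝 t, C / s ^ γ ∈ Ico (0 : ℝ) 1 :=
    (eventually_pos_and_const_div_rpow_lt_one ht hz).mono fun _ hs =>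
      ⟨div_nonneg hC (Real.rpow_nonneg hs.1.le γ), hs.2⟩
  refine ((Real.hasDerivAt_rpow_const (Or.inl ht.ne')).mul ((hχ _ hmem.self_of_nhds).comp_hasDerivAt
    t (hasDerivAt_const_div_rpow C γ ht) hmem)).congr_deriv ?_
  rw [Function.comp_apply, Real.rpow_sub_one ht.ne']
  field_simp
  ring

theorem deriv_rpow_mul_comp_div_rpow_eventuallyEq {χ χ' : ℝ → ℝ}
    (hχ : ∀ w ∈ Ico (0 : ℝ) 1, HasDerivWithinAt χ (χ' w) (Ico 0 1) w) (p γ : ℝ) {C t : ℝ}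
    (hC : 0 ≤ C) (ht : 0 < t) (hz : C / t ^ γ < 1) :
    deriv (fun s => s ^ p * χ (C / s ^ γ)) =ᶠ[𝓝 t]
      fun s => s ^ (p - 1) * (p * χ (C / s ^ γ) - γ * (C / s ^ γ) * χ' (C / s ^ γ)) :=
  (eventually_pos_and_const_div_rpow_lt_one ht hz).mono fun _ hs =>
    (hasDerivAt_rpow_mul_comp_div_rpow hχ p γ hC hs.1 hs.2).deriv

theorem deriv_deriv_sub_deriv_inv_mul {ψ ψ₁ ψ₂ : ℝ → ℝ}
    (hψ : ∀ w ∈ Ico (0 : ℝ) 1, HasDerivWithinAt ψ (ψ₁ w) (Ico 0 1) w)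
    (hψ₁ : ∀ w ∈ Ico (0 : ℝ) 1, HasDerivWithinAt ψ₁ (ψ₂ w) (Ico 0 1) w) (β μ γ : ℝ) {C t : ℝ}
    (hC : 0 ≤ C) (ht : 0 < t) (hz : C / t ^ γ < 1) :
    deriv (deriv fun s => s ^ (1 - β) * ψ (C / s ^ γ)) t -
        deriv (fun s => μ / s * (s ^ (1 - β) * ψ (C / s ^ γ))) t =
      t ^ (1 - β - 1 - 1) * (γ ^ 2 * (C / t ^ γ) ^ 2 * ψ₂ (C / t ^ γ) +
        γ * (γ + 2 * β - 1 + μ) * (C / t ^ γ) * ψ₁ (C / t ^ γ) +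
        β * (β + μ - 1) * ψ (C / t ^ γ)) := by
  -- The first derivative and `μ/s · s^{1-β} ψ(C/s^γ)` are again of the form `s^p χ(C/s^γ)`.
  have hχ : ∀ w ∈ Ico (0 : ℝ) 1, HasDerivWithinAt (fun w => (1 - β) * ψ w - γ * w * ψ₁ w)
      ((1 - β) * ψ₁ w - γ * (ψ₁ w + w * ψ₂ w)) (Ico 0 1) w := fun w hw =>
    (((hψ w hw).const_mul _).sub (((hasDerivWithinAt_id w _).const_mul γ).mul
      (hψ₁ w hw))).congr_deriv (by simp only [mul_one, id_eq]; ring)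
  have hμ : (fun s => μ / s * (s ^ (1 - β) * ψ (C / s ^ γ))) =ᶠ[𝓝 t]
      fun s => s ^ (1 - β - 1) * (μ * ψ (C / s ^ γ)) := by
    filter_upwards [eventually_gt_nhds ht] with s hs
    rw [Real.rpow_sub_one hs.ne']
    ring
  rw [(deriv_rpow_mul_comp_div_rpow_eventuallyEq hψ (1 - β) γ hC ht hz).deriv_eq, hμ.deriv_eq,
    (hasDerivAt_rpow_mul_comp_div_rpow hχ (1 - β - 1) γ hC ht hz).deriv,
    (hasDerivAt_rpow_mul_comp_div_rpow (fun w hw => (hψ w hw).const_mul μ) (1 - β - 1) γ hC ht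
      hz).deriv]
  ring

/-- Gauss's operator `w(1-w)y'' + (c - (a+b+1)w)y' - ab y`, with `s = a+b+1` and `p = ab`. -/
def hypergeometricOp (c s p : ℝ) (y y' y'' : ℝ → ℝ) (w : ℝ) : ℝ :=
  w * (1 - w) * y'' w + (c - s * w) * y' w - p * y w

/-- The conjugate of the Euler–Poisson–Darboux–Tricomi operator
`∂²_t - t^{2m}Δ + (μ/t)∂_t + ν²/t²`. -/
noncomputable def epdtAdjointOp {n : ℕ} (m μ ν : ℝ) (Φ : ℝ → EuclideanSpace ℝ (Fin n) → ℝ) (t : ℝ)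
    (x : EuclideanSpace ℝ (Fin n)) : ℝ :=
  deriv (deriv fun s => Φ s x) t - t ^ (2 * m) * lap (Φ t) x - deriv (fun s => μ / s * Φ s x) t +
    ν ^ 2 / t ^ 2 * Φ t x

theorem epdtAdjointOp_selfSimilar {n : ℕ} {ψ ψ₁ ψ₂ : ℝ → ℝ}
    (hψ : ∀ w ∈ Ico (0 : ℝ) 1, HasDerivWithinAt ψ (ψ₁ w) (Ico 0 1) w)
    (hψ₁ : ∀ w ∈ Ico (0 : ℝ) 1, HasDerivWithinAt ψ₁ (ψ₂ w) (Ico 0 1) w)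
    {m : ℝ} (μ ν β : ℝ) (hm : m + 1 ≠ 0) (t : ℝ) (x : EuclideanSpace ℝ (Fin n)) (ht : 0 < t)
    (hx : (m + 1) ^ 2 * ‖x‖ ^ 2 / t ^ (2 * (m + 1)) < 1) :
    epdtAdjointOp m μ ν
        (fun t x => t ^ (1 - β) * ψ ((m + 1) ^ 2 * ‖x‖ ^ 2 / t ^ (2 * (m + 1)))) t x =
      -4 * (m + 1) ^ 2 * (t ^ (1 - β) / t ^ 2) *
        hypergeometricOp (n / 2) ((β - 1) / (m + 1) + 1 / (2 * (m + 1)) + μ / (2 * (m + 1)) + 1)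
          ((β * (β + μ - 1) + ν ^ 2) / (4 * (m + 1) ^ 2)) ψ ψ₁ ψ₂
          ((m + 1) ^ 2 * ‖x‖ ^ 2 / t ^ (2 * (m + 1))) := by
  have htime := deriv_deriv_sub_deriv_inv_mul hψ hψ₁ β μ (2 * (m + 1)) (by positivity) ht hx
  have hpow : t ^ (2 * (m + 1)) = t ^ (2 * m) * t ^ 2 := by
    rw [mul_add, mul_one, Real.rpow_add ht, Real.rpow_two]
  have hc : 0 ≤ (m + 1) ^ 2 / t ^ (2 * (m + 1)) := by positivity
  have hlap := lap_comp_mul_norm_sq (ψ := fun w => t ^ (1 - β) * ψ w)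
    (fun w hw => (hψ w hw).const_mul _) (fun w hw => (hψ₁ w hw).const_mul _) hc
    (x := x) (by rwa [← mul_div_right_comm])
  simp only [← mul_div_right_comm] at hlap
  simp only [epdtAdjointOp, hypergeometricOp]
  rw [sub_right_comm, htime, hlap, show (1 - β - 1 - 1) = (1 - β) - 2 by ring, Real.rpow_sub ht,
    Real.rpow_two]
  generalize (m + 1) ^ 2 * ‖x‖ ^ 2 / t ^ (2 * (m + 1)) = z
  rw [hpow]
  have ht' : t ^ (2 * m) ≠ 0 := (Real.rpow_pos_of_pos ht _).ne'
  field_simp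
  ring

theorem hypergeometricOp_derivWithin_Ico_eq_zero_iff {ψ : ℝ → ℝ}
    (hψ : ContDiffOn ℝ 2 ψ (Ico 0 1)) (c s p : ℝ) :
    (∀ w ∈ Ico (0 : ℝ) 1, hypergeometricOp c s p ψ (derivWithin ψ (Ico 0 1))
        (derivWithin (derivWithin ψ (Ico 0 1)) (Ico 0 1)) w = 0) ↔
      ∀ w ∈ Ioo (0 : ℝ) 1, hypergeometricOp c s p ψ (deriv ψ) (deriv (deriv ψ)) w = 0 := by
  have heq : ∀ w ∈ Ioo (0 : ℝ) 1, hypergeometricOp c s p ψ (derivWithin ψ (Ico 0 1))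
      (derivWithin (derivWithin ψ (Ico 0 1)) (Ico 0 1)) w =
        hypergeometricOp c s p ψ (deriv ψ) (deriv (deriv ψ)) w := fun w hw => by
    have h := Ico_mem_nhds hw.1 hw.2
    simp only [hypergeometricOp]
    rw [derivWithin_derivWithin_of_mem_nhds h, derivWithin_of_mem_nhds h]
  refine ⟨fun h w hw => heq w hw ▸ h w (Ioo_subset_Ico_self hw), fun h w hw => ?_⟩
  rcases hw.1.eq_or_lt with rfl | hw0
  -- At the endpoint the equation is the limit of the equation on `(0, 1)`.
  · have hψ₁ := hψ.derivWithin (m := 1) (uniqueDiffOn_Ico 0 1) (by norm_num)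
    have hcont : ContinuousOn (hypergeometricOp c s p ψ (derivWithin ψ (Ico 0 1))
        (derivWithin (derivWithin ψ (Ico 0 1)) (Ico 0 1))) (Ico 0 1) := by
      have hc₀ := hψ.continuousOn
      have hc₁ := hψ₁.continuousOn
      have hc₂ := hψ₁.continuousOn_derivWithin (uniqueDiffOn_Ico 0 1) le_rfl
      unfold hypergeometricOp
      fun_prop
    have h0 : (0 : ℝ) ∈ closure (Ioo 0 1) := by
      rw [closure_Ioo zero_ne_one]
      exact ⟨le_rfl, zero_le_one⟩
    have := ((hcont 0 hw).mono Ioo_subset_Ico_self).mem_closure_image h0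
    refine closure_minimal ?_ isClosed_singleton this
    rintro _ ⟨v, hv, rfl⟩
    exact (heq v hv).trans (h v hv)
  · exact (heq w ⟨hw0, hw.2⟩).trans (h w ⟨hw0, hw.2⟩)

theorem sq_mul_sq_div_rpow_lt_one_iff {a r t : ℝ} (ha : 0 < a) (hr : 0 ≤ r) (ht : 0 < t) :
    a ^ 2 * r ^ 2 / t ^ (2 * a) < 1 ↔ r < t ^ a / a := by
  rw [show a ^ 2 * r ^ 2 / t ^ (2 * a) = (a * r / t ^ a) ^ 2 by
      rw [mul_comm 2 a, Real.rpow_mul ht.le, Real.rpow_two]; ring,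
    sq_lt_one_iff₀ (by positivity), div_lt_one (by positivity), lt_div_iff₀ ha, mul_comm]

theorem exists_sq_mul_sq_norm_eq {n : ℕ} (hn : 1 ≤ n) {a w : ℝ} (ha : 0 < a) (hw : 0 ≤ w) :
    ∃ x : EuclideanSpace ℝ (Fin n), a ^ 2 * ‖x‖ ^ 2 = w := by
  have : Nonempty (Fin n) := ⟨⟨0, hn⟩⟩
  obtain ⟨x, hx⟩ :=
    exists_norm_eq (EuclideanSpace ℝ (Fin n)) (div_nonneg (Real.sqrt_nonneg w) ha.le)
  refine ⟨x, ?_⟩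
  rw [hx, div_pow, Real.sq_sqrt hw]
  field_simp

theorem stmt_3_general (m μ ν β : ℝ) (n : ℕ) (hm : 0 ≤ m) (hn : 1 ≤ n) (ψ : ℝ → ℝ)
    (hψ : ContDiffOn ℝ 2 ψ (Ico 0 1)) :
    let z : ℝ → EuclideanSpace ℝ (Fin n) → ℝ :=
      fun t x => (m + 1) ^ 2 * ‖x‖ ^ 2 / t ^ (2 * (m + 1))
    let Φ : ℝ → EuclideanSpace ℝ (Fin n) → ℝ := fun t x => t ^ (1 - β) * ψ (z t x)
    ((∀ t : ℝ, 1 ≤ t → ∀ x : EuclideanSpace ℝ (Fin n), ‖x‖ < t ^ (m + 1) / (m + 1) →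
        deriv (deriv (fun s => Φ s x)) t - t ^ (2 * m) * lap (Φ t) x -
          deriv (fun s => μ / s * Φ s x) t + ν ^ 2 / t ^ 2 * Φ t x = 0) ↔
      (∀ w ∈ Ioo (0 : ℝ) 1,
        w * (1 - w) * deriv (deriv ψ) w +
          ((n : ℝ) / 2 - ((β - 1) / (m + 1) + 1 / (2 * (m + 1)) + μ / (2 * (m + 1)) + 1) * w) *
            deriv ψ w -
          (β * (β + μ - 1) + ν ^ 2) / (4 * (m + 1) ^ 2) * ψ w = 0)) := by
  intro z Φ
  have hm1 : 0 < m + 1 := by linarith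
  have hψ₁ := hψ.derivWithin (m := 1) (uniqueDiffOn_Ico 0 1) (by norm_num)
  have hop := epdtAdjointOp_selfSimilar (n := n)
    (fun w hw => (hψ.differentiableOn (by norm_num) w hw).hasDerivWithinAt)
    (fun w hw => (hψ₁.differentiableOn one_ne_zero w hw).hasDerivWithinAt) μ ν β hm1.ne'
  refine Iff.trans ?_ (hypergeometricOp_derivWithin_Ico_eq_zero_iff hψ _ _ _)
  show (∀ t, 1 ≤ t → ∀ x, ‖x‖ < t ^ (m + 1) / (m + 1) → epdtAdjointOp m μ ν Φ t x = 0) ↔ _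
  constructor
  · intro h w hw
    obtain ⟨x, hx⟩ := exists_sq_mul_sq_norm_eq hn hm1 hw.1
    have hzx : z 1 x = w := by simp [z, hx]
    have hz : z 1 x < 1 := hzx ▸ hw.2
    have := h 1 le_rfl x ((sq_mul_sq_div_rpow_lt_one_iff hm1 (norm_nonneg x) one_pos).1 hz)
    rw [hop 1 x one_pos hz, mul_eq_zero] at this
    exact hzx ▸ this.resolve_left (by positivity)
  · intro h t ht x hx
    have ht0 : 0 < t := one_pos.trans_le ht
    have hz := (sq_mul_sq_div_rpow_lt_one_iff hm1 (norm_nonneg x) ht0).2 hx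
    rw [hop t x ht0 hz, h _ ⟨by positivity, hz⟩, mul_zero]

theorem stmt_3 (m μ ν β : ℝ) (n : ℕ) (hm : 0 ≤ m) (hn : 1 ≤ n) (hμ : 0 ≤ μ) (hν : 0 ≤ ν)
    (hδ : 0 < (μ - 1) ^ 2 - 4 * ν ^ 2) (ψ : ℝ → ℝ) (hψ : ContDiffOn ℝ 2 ψ (Ico 0 1)) :
    let z : ℝ → EuclideanSpace ℝ (Fin n) → ℝ :=
      fun t x => (m + 1) ^ 2 * ‖x‖ ^ 2 / t ^ (2 * (m + 1))
    let Φ : ℝ → EuclideanSpace ℝ (Fin n) → ℝ := fun t x => t ^ (1 - β) * ψ (z t x)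
    ((∀ t : ℝ, 1 ≤ t → ∀ x : EuclideanSpace ℝ (Fin n), ‖x‖ < t ^ (m + 1) / (m + 1) →
        deriv (deriv (fun s => Φ s x)) t - t ^ (2 * m) * lap (Φ t) x -
          deriv (fun s => μ / s * Φ s x) t + ν ^ 2 / t ^ 2 * Φ t x = 0) ↔
      (∀ w ∈ Ioo (0 : ℝ) 1,
        w * (1 - w) * deriv (deriv ψ) w +
          ((n : ℝ) / 2 - ((β - 1) / (m + 1) + 1 / (2 * (m + 1)) + μ / (2 * (m + 1)) + 1) * w) *
            deriv ψ w -
          (β * (β + μ - 1) + ν ^ 2) / (4 * (m + 1) ^ 2) * ψ w = 0)) :=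
  stmt_3_general m μ ν β n hm hn ψ hψ
end

section
/- Let H : [1,∞) → [0,∞) be continuous, β real, and define I(t) = ∫₁ᵗ (t-s) s H(s) ds and J(t) = ∫₁ᵗ (1+s)^{-3} I(s) ds for t ≥ 1. Then for every t ≥ 1, t² J(t) ≤ (1/2) ∫₁ᵗ (t-s)² H(s) ds. -/
/-!
The weight `ψ(s) = (t - s)² / (1 + s)` satisfies `ψ(t) = ψ'(t) = 0` and
`ψ'' = 2 (1 + t)² / (1 + s)³`, while `I(1) = I'(1) = 0` and `I'' = s H(s)`. Integrating by parts
twice therefore gives `2 (1 + t)² J(t) = ∫₁ᵗ ψ(s) s H(s) ds`, and the claim follows from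
`t² s ≤ (1 + t)² (1 + s)` and `H ≥ 0`.
-/

open intervalIntegral Set

section Primitive

variable {f : ℝ → ℝ} {a b : ℝ}

theorem hasDerivAt_integral_of_continuousOn_Icc (hf : ContinuousOn f (Icc a b)) {x : ℝ}
    (hx : x ∈ Ioo a b) : HasDerivAt (fun y => ∫ s in a..y, f s) (f x) x :=
  integral_hasDerivAt_right
    ((hf.mono (Icc_subset_Icc_right hx.2.le)).intervalIntegrable_of_Icc hx.1.le)
    ((hf.mono Ioo_subset_Icc_self).stronglyMeasurableAtFilter isOpen_Ioo x hx)
    (hf.continuousAt (Icc_mem_nhds hx.1 hx.2))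

theorem continuousOn_integral_of_continuousOn_Icc (hab : a ≤ b) (hf : ContinuousOn f (Icc a b)) :
    ContinuousOn (fun y => ∫ s in a..y, f s) (Icc a b) := by
  rw [← uIcc_of_le hab] at hf ⊢
  exact continuousOn_primitive_interval hf.integrableOn_Icc

theorem integral_sub_mul_eq {x : ℝ} (hf : ContinuousOn f (uIcc a x)) :
    ∫ s in a..x, (x - s) * f s = x * (∫ s in a..x, f s) - ∫ s in a..x, s * f s := by
  have hxf : IntervalIntegrable (fun s => x * f s) MeasureTheory.volume a x :=
    hf.intervalIntegrable.const_mul x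
  have hsf : IntervalIntegrable (fun s => s * f s) MeasureTheory.volume a x :=
    (continuousOn_id.mul hf).intervalIntegrable
  simp only [sub_mul]
  rw [integral_sub hxf hsf, integral_const_mul]

theorem hasDerivAt_integral_sub_mul (hf : ContinuousOn f (Icc a b)) {x : ℝ} (hx : x ∈ Ioo a b) :
    HasDerivAt (fun y => ∫ s in a..y, (y - s) * f s) (∫ s in a..x, f s) x := by
  have hxf : HasDerivAt (fun y => y * (∫ s in a..y, f s) - ∫ s in a..y, s * f s)
      (1 * (∫ s in a..x, f s) + x * f x - x * f x) x :=
    ((hasDerivAt_id x).mul (hasDerivAt_integral_of_continuousOn_Icc hf hx)).sub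
      (hasDerivAt_integral_of_continuousOn_Icc (continuousOn_id.mul hf) hx)
  rw [one_mul, add_sub_cancel_right] at hxf
  refine hxf.congr_of_eventuallyEq ?_
  filter_upwards [Ioo_mem_nhds hx.1 hx.2] with y hy
  exact integral_sub_mul_eq
    (by rw [uIcc_of_le hy.1.le]; exact hf.mono (Icc_subset_Icc_right hy.2.le))

theorem continuousOn_integral_sub_mul (hab : a ≤ b) (hf : ContinuousOn f (Icc a b)) :
    ContinuousOn (fun y => ∫ s in a..y, (y - s) * f s) (Icc a b) := by
  refine ((continuousOn_id.mul (continuousOn_integral_of_continuousOn_Icc hab hf)).sub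
    (continuousOn_integral_of_continuousOn_Icc hab (continuousOn_id.mul hf))).congr fun y hy => ?_
  exact integral_sub_mul_eq (by rw [uIcc_of_le hy.1]; exact hf.mono (Icc_subset_Icc_right hy.2))

end Primitive

theorem integral_mul_deriv_deriv_eq {u u' u'' v v' v'' : ℝ → ℝ} {a b : ℝ} (hab : a ≤ b)
    (hu : ContinuousOn u (Icc a b)) (hu' : ContinuousOn u' (Icc a b))
    (hv : ContinuousOn v (Icc a b)) (hv' : ContinuousOn v' (Icc a b))
    (hu'' : IntervalIntegrable u'' MeasureTheory.volume a b)
    (hv'' : IntervalIntegrable v'' MeasureTheory.volume a b)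
    (huu' : ∀ x ∈ Ioo a b, HasDerivAt u (u' x) x)
    (hu'u'' : ∀ x ∈ Ioo a b, HasDerivAt u' (u'' x) x)
    (hvv' : ∀ x ∈ Ioo a b, HasDerivAt v (v' x) x)
    (hv'v'' : ∀ x ∈ Ioo a b, HasDerivAt v' (v'' x) x) :
    ∫ x in a..b, u x * v'' x =
      (∫ x in a..b, u'' x * v x) + (u b * v' b - u' b * v b) - (u a * v' a - u' a * v a) := by
  rw [← uIcc_of_le hab] at hu hu' hv hv'
  have hIoo : Ioo a b = Ioo (min a b) (max a b) := by rw [min_eq_left hab, max_eq_right hab]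
  rw [hIoo] at huu' hu'u'' hvv' hv'v''
  rw [integral_mul_deriv_eq_deriv_mul_of_hasDerivAt hu hv' huu' hv'v'' hu'.intervalIntegrable hv'',
    integral_mul_deriv_eq_deriv_mul_of_hasDerivAt hu' hv hu'u'' hvv' hu'' hv'.intervalIntegrable]
  ring

theorem hasDerivAt_sub_sq_div_one_add (t : ℝ) {s : ℝ} (hs : 1 + s ≠ 0) :
    HasDerivAt (fun r => (t - r) ^ 2 / (1 + r)) (1 - ((1 + t) / (1 + s)) ^ 2) s := by
  refine ((((hasDerivAt_id' s).const_sub t).fun_pow 2).fun_div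
    ((hasDerivAt_id' s).const_add 1) hs).congr_deriv ?_
  field_simp
  ring

theorem hasDerivAt_one_sub_div_one_add_sq (t : ℝ) {s : ℝ} (hs : 1 + s ≠ 0) :
    HasDerivAt (fun r => 1 - ((1 + t) / (1 + r)) ^ 2) (2 * (1 + t) ^ 2 / (1 + s) ^ 3) s := by
  refine ((((hasDerivAt_const s (1 + t)).fun_div ((hasDerivAt_id' s).const_add 1) hs).fun_pow
    2).const_sub 1).congr_deriv ?_
  norm_num
  field_simp
  ring

theorem mul_sub_sq_div_one_add_le {s t h : ℝ} (hs : 0 ≤ s) (ht : 0 ≤ t) (hh : 0 ≤ h) :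
    t ^ 2 / (2 * (1 + t) ^ 2) * ((t - s) ^ 2 / (1 + s) * (s * h)) ≤
      1 / 2 * ((t - s) ^ 2 * h) := by
  have key : t ^ 2 * s ≤ (1 + t) ^ 2 * (1 + s) := by nlinarith
  have h1s : 0 < 1 + s := by linarith
  rw [div_mul_eq_mul_div, div_le_iff₀ (by positivity), div_mul_eq_mul_div, mul_div_assoc',
    div_le_iff₀ h1s]
  linear_combination mul_le_mul_of_nonneg_right key (mul_nonneg (sq_nonneg (t - s)) hh)

theorem integral_sub_sq_div_one_add_mul_eq {f : ℝ → ℝ} {a b : ℝ} (ha : -1 < a)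
    (hab : a ≤ b) (hf : ContinuousOn f (Icc a b)) :
    ∫ s in a..b, (b - s) ^ 2 / (1 + s) * f s =
      ∫ s in a..b, 2 * (1 + b) ^ 2 / (1 + s) ^ 3 * ∫ r in a..s, (s - r) * f r := by
  have hne : ∀ s ∈ Icc a b, 1 + s ≠ 0 := fun s hs => by linarith [hs.1]
  have hparts := integral_mul_deriv_deriv_eq hab (u := fun s => (b - s) ^ 2 / (1 + s))
    (u' := fun s => 1 - ((1 + b) / (1 + s)) ^ 2) (u'' := fun s => 2 * (1 + b) ^ 2 / (1 + s) ^ 3)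
    (v := fun s => ∫ r in a..s, (s - r) * f r) (v' := fun s => ∫ r in a..s, f r) (v'' := f)
    (fun x hx => (hasDerivAt_sub_sq_div_one_add b (hne x hx)).continuousAt.continuousWithinAt)
    (fun x hx => (hasDerivAt_one_sub_div_one_add_sq b (hne x hx)).continuousAt.continuousWithinAt)
    (continuousOn_integral_sub_mul hab hf) (continuousOn_integral_of_continuousOn_Icc hab hf)
    ((continuousOn_const.div (by fun_prop) fun s hs =>
      pow_ne_zero 3 (hne s hs)).intervalIntegrable_of_Icc hab)
    (hf.intervalIntegrable_of_Icc hab)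
    (fun x hx => hasDerivAt_sub_sq_div_one_add b (hne x (Ioo_subset_Icc_self hx)))
    (fun x hx => hasDerivAt_one_sub_div_one_add_sq b (hne x (Ioo_subset_Icc_self hx)))
    (fun x hx => hasDerivAt_integral_sub_mul hf hx)
    (fun x hx => hasDerivAt_integral_of_continuousOn_Icc hf hx)
  have h1b : 1 + b ≠ 0 := hne b ⟨hab, le_rfl⟩
  simpa only [sub_self, ne_eq, OfNat.ofNat_ne_zero, not_false_eq_true, zero_pow, zero_div,
    zero_mul, div_self h1b, one_pow, add_zero, integral_same, mul_zero, sub_zero] using hparts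

theorem stmt_12_general (H : ℝ → ℝ) (hcont : ContinuousOn H (Set.Ici 1))
    (hnn : ∀ t ∈ Set.Ici (1 : ℝ), 0 ≤ H t) :
    let I : ℝ → ℝ := fun t => ∫ s in (1 : ℝ)..t, (t - s) * s * H s
    let J : ℝ → ℝ := fun t => ∫ s in (1 : ℝ)..t, ((1 + s) ^ 3)⁻¹ * I s
    ∀ t : ℝ, 1 ≤ t → t ^ 2 * J t ≤ (1 / 2) * ∫ s in (1 : ℝ)..t, (t - s) ^ 2 * H s := by
  intro I J t ht
  have hH : ContinuousOn H (Icc 1 t) := hcont.mono Icc_subset_Ici_self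
  have hsH : ContinuousOn (fun s => s * H s) (Icc 1 t) := continuousOn_id.mul hH
  have hlhs : ContinuousOn (fun s => (t - s) ^ 2 / (1 + s) * (s * H s)) (Icc 1 t) :=
    ((by fun_prop : ContinuousOn (fun s : ℝ => (t - s) ^ 2) _).div (by fun_prop)
      fun s hs => by linarith [hs.1]).mul hsH
  have hJ : 2 * (1 + t) ^ 2 * J t = ∫ s in (1 : ℝ)..t, (t - s) ^ 2 / (1 + s) * (s * H s) := by
    rw [integral_sub_sq_div_one_add_mul_eq (by norm_num) ht hsH]
    simp only [J, I, div_eq_mul_inv, mul_assoc, integral_const_mul]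
  calc t ^ 2 * J t = t ^ 2 / (2 * (1 + t) ^ 2) * (2 * (1 + t) ^ 2 * J t) := by field_simp
    _ = ∫ s in (1 : ℝ)..t, t ^ 2 / (2 * (1 + t) ^ 2) * ((t - s) ^ 2 / (1 + s) * (s * H s)) := by
      rw [hJ, integral_const_mul]
    _ ≤ ∫ s in (1 : ℝ)..t, 1 / 2 * ((t - s) ^ 2 * H s) := by
      refine integral_mono_on ht ?_ ?_ fun s hs =>
        mul_sub_sq_div_one_add_le (by linarith [hs.1]) (by linarith) (hnn s hs.1)
      · exact (continuousOn_const.mul hlhs).intervalIntegrable_of_Icc ht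
      · have hrhs : ContinuousOn (fun s => 1 / 2 * ((t - s) ^ 2 * H s)) (Icc 1 t) := by fun_prop
        exact hrhs.intervalIntegrable_of_Icc ht
    _ = 1 / 2 * ∫ s in (1 : ℝ)..t, (t - s) ^ 2 * H s := integral_const_mul _ _

theorem stmt_12 (H : ℝ → ℝ) (β : ℝ) (hcont : ContinuousOn H (Set.Ici 1))
    (hnn : ∀ t ∈ Set.Ici (1 : ℝ), 0 ≤ H t) :
    let I : ℝ → ℝ := fun t => ∫ s in (1 : ℝ)..t, (t - s) * s * H s
    let J : ℝ → ℝ := fun t => ∫ s in (1 : ℝ)..t, ((1 + s) ^ 3)⁻¹ * I s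
    ∀ t : ℝ, 1 ≤ t → t ^ 2 * J t ≤ (1 / 2) * ∫ s in (1 : ℝ)..t, (t - s) ^ 2 * H s :=
  stmt_12_general H hcont hnn
end

section
/- Let m ≥ 0 and for t ≥ 1 define λ(t) = (1/(m+1))^{1/(2(m+1))} t^{1/2} K_{1/(2(m+1))}(t^{m+1}/(m+1)), where K_l(z) = ∫₀^∞ e^{-z cosh y} cosh(l y) dy is the modified Bessel function of the second kind. Then λ''(t) - t^{2m} λ(t) = 0 for all t ≥ 1. -/
open Real

/-- The modified Bessel function of the second kind,
`K_l(z) = ∫₀^∞ e^{-z cosh y} cosh (l y) dy`. -/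
noncomputable def besselK (l z : ℝ) : ℝ :=
  ∫ y in Set.Ioi (0 : ℝ), Real.exp (-z * Real.cosh y) * Real.cosh (l * y)

/-!
Since `cosh y ≥ y²/4`, the kernel `e^{-z cosh y}` beats every exponential `e^{k|y|}`, so `K_l`
may be differentiated under the integral sign: `K_l' = -∫ e^{-z cosh y} cosh y cosh (l y)` and
`K_l'' = ∫ e^{-z cosh y} cosh² y cosh (l y)`. Integrating the derivative of
`e^{-z cosh y} (z sinh y cosh (l y) + l sinh (l y))` over `(0, ∞)` and using `sinh² = cosh² - 1`
gives the modified Bessel equation `z² K_l'' + z K_l' - (z² + l²) K_l = 0`. Finally, for any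
solution `w` of that equation with `l = 1/(2a)`, the function `λ(t) = √t w(tᵃ/a)` satisfies
`λ'' = t^{2a-2} λ`, a direct chain-rule computation; take `a = m + 1`.
-/

open MeasureTheory Set Filter Topology

namespace Real

lemma sq_div_four_le_cosh (y : ℝ) : y ^ 2 / 4 ≤ cosh y := by
  have := quadratic_le_exp_of_nonneg (abs_nonneg y)
  rw [← cosh_abs, cosh_eq]
  nlinarith [exp_pos (-|y|), sq_abs y, abs_nonneg y]

lemma cosh_le_exp_abs (y : ℝ) : cosh y ≤ exp |y| := by
  rw [cosh_eq]
  linarith [exp_le_exp.2 (le_abs_self y), exp_le_exp.2 (neg_le_abs y)]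

lemma abs_sinh_le_cosh (y : ℝ) : |sinh y| ≤ cosh y := by
  have := sinh_lt_cosh (-y)
  rw [sinh_neg, cosh_neg] at this
  exact abs_le.2 ⟨by linarith, (sinh_lt_cosh y).le⟩

end Real

lemma integrable_exp_neg_mul_cosh_mul_exp_abs {z : ℝ} (hz : 0 < z) (k : ℝ) :
    Integrable fun y => exp (-z * cosh y) * exp (k * |y|) := by
  refine ((integrable_exp_neg_mul_sq (b := z / 8) (by positivity)).const_mul
    (exp (2 * k ^ 2 / z))).mono' (by fun_prop) (Eventually.of_forall fun y => ?_)
  rw [norm_of_nonneg (by positivity), ← exp_add, ← exp_add, exp_le_exp]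
  -- completing the square: `z/8 * (|y| - 4k/z)^2 ≥ 0`
  have hsq : 0 ≤ z / 8 * (|y| - 4 * k / z) ^ 2 := by positivity
  have := sq_div_four_le_cosh y
  have e : z / 8 * (|y| - 4 * k / z) ^ 2 = z / 8 * y ^ 2 - k * |y| + 2 * k ^ 2 / z := by
    rw [← sq_abs y]; field_simp; ring
  nlinarith

/-- Up to the sign `(-1)ⁿ`, the `n`-th derivative of `besselK l`. -/
noncomputable def besselKMoment (n : ℕ) (l z : ℝ) : ℝ :=
  ∫ y in Ioi (0 : ℝ), exp (-z * cosh y) * (cosh y ^ n * cosh (l * y))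

lemma besselKMoment_zero (l : ℝ) : besselKMoment 0 l = besselK l := by
  ext z; simp [besselKMoment, besselK]

lemma integrable_besselKMoment_integrand (n : ℕ) (l : ℝ) {z : ℝ} (hz : 0 < z) :
    Integrable fun y => exp (-z * cosh y) * (cosh y ^ n * cosh (l * y)) := by
  refine (integrable_exp_neg_mul_cosh_mul_exp_abs hz (n + |l|)).mono' (by fun_prop)
    (Eventually.of_forall fun y => ?_)
  rw [norm_of_nonneg (by positivity)]
  gcongr
  calc cosh y ^ n * cosh (l * y) ≤ exp |y| ^ n * exp |l * y| := by
        gcongr <;> exact cosh_le_exp_abs _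
    _ = exp ((n + |l|) * |y|) := by rw [← exp_nat_mul, ← exp_add, abs_mul]; ring_nf

lemma hasDerivAt_besselKMoment (n : ℕ) (l : ℝ) {z : ℝ} (hz : 0 < z) :
    HasDerivAt (besselKMoment n l) (-besselKMoment (n + 1) l z) z := by
  have key := hasDerivAt_integral_of_dominated_loc_of_deriv_le
    (μ := volume.restrict (Ioi 0)) (s := Ioi (z / 2)) (Ioi_mem_nhds (half_lt_self hz))
    (F := fun x y => exp (-x * cosh y) * (cosh y ^ n * cosh (l * y)))
    (F' := fun x y => -(exp (-x * cosh y) * (cosh y ^ (n + 1) * cosh (l * y))))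
    (bound := fun y => exp (-(z / 2) * cosh y) * (cosh y ^ (n + 1) * cosh (l * y)))
    (Eventually.of_forall fun x => by fun_prop)
    (integrable_besselKMoment_integrand n l hz).integrableOn (by fun_prop)
    (Eventually.of_forall fun y x hx => ?_)
    (integrable_besselKMoment_integrand (n + 1) l (half_pos hz)).integrableOn
    (Eventually.of_forall fun y x _ => ?_)
  · rw [besselKMoment, ← integral_neg]; exact key.2
  · rw [norm_neg, norm_of_nonneg (by positivity)]
    gcongr
    exact (mem_Ioi.1 hx).le
  · exact (((hasDerivAt_neg x).mul_const (cosh y)).exp.mul_const _).congr_deriv (by ring)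

lemma hasDerivAt_besselK (l : ℝ) {z : ℝ} (hz : 0 < z) :
    HasDerivAt (besselK l) (-besselKMoment 1 l z) z :=
  besselKMoment_zero l ▸ hasDerivAt_besselKMoment 0 l hz

lemma besselK_ode (l : ℝ) {z : ℝ} (hz : 0 < z) :
    z ^ 2 * besselKMoment 2 l z + z * -besselKMoment 1 l z - (z ^ 2 + l ^ 2) * besselK l z = 0 := by
  set f : ℕ → ℝ → ℝ := fun n y => exp (-z * cosh y) * (cosh y ^ n * cosh (l * y)) with hf
  have hfi (n : ℕ) : IntegrableOn (f n) (Ioi 0) :=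
    (integrable_besselKMoment_integrand n l hz).integrableOn
  -- integrate by parts against `G`, which vanishes at `0` and `∞`
  set G : ℝ → ℝ := fun y => exp (-z * cosh y) * (z * sinh y * cosh (l * y) + l * sinh (l * y))
  set g : ℝ → ℝ := fun y => (z ^ 2 + l ^ 2) * f 0 y + z * f 1 y - z ^ 2 * f 2 y
  have hG (y : ℝ) : HasDerivAt G (g y) y := by
    have hly : HasDerivAt (fun y => l * y) l y := by simpa using (hasDerivAt_id y).const_mul l
    have := ((hasDerivAt_cosh y).const_mul (-z)).exp.mul
      ((((hasDerivAt_sinh y).const_mul z).mul ((hasDerivAt_cosh _).comp y hly)).add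
        (((hasDerivAt_sinh _).comp y hly).const_mul l))
    refine this.congr_deriv ?_
    simp only [g, hf, Function.comp_apply, Pi.mul_apply, Pi.add_apply]
    linear_combination (-z ^ 2 * exp (-z * cosh y) * cosh (l * y)) * sinh_sq y
  have hGi : IntegrableOn G (Ioi 0) := by
    refine ((hfi 1).const_mul z |>.add ((hfi 0).const_mul |l|)).mono' (by fun_prop)
      (Eventually.of_forall fun y => ?_)
    have hbound : |z * sinh y * cosh (l * y) + l * sinh (l * y)|
        ≤ z * cosh y * cosh (l * y) + |l| * cosh (l * y) := by
      refine (abs_add_le _ _).trans ?_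
      simp only [abs_mul, abs_of_pos hz, abs_of_pos (cosh_pos _)]
      gcongr _ * ?_ * _ + _ * ?_
      · exact abs_sinh_le_cosh y
      · exact abs_sinh_le_cosh (l * y)
    calc ‖G y‖ ≤ exp (-z * cosh y) * (z * cosh y * cosh (l * y) + |l| * cosh (l * y)) := by
          rw [norm_mul, norm_of_nonneg (exp_pos _).le, Real.norm_eq_abs]; gcongr
      _ = z * f 1 y + |l| * f 0 y := by simp only [hf]; ring
  have hgi : IntegrableOn g (Ioi 0) :=
    (((hfi 0).const_mul _).add ((hfi 1).const_mul _)).sub ((hfi 2).const_mul _)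
  have hG_top : Tendsto G atTop (𝓝 0) :=
    tendsto_zero_of_hasDerivAt_of_integrableOn_Ioi (fun y _ => hG y) hgi hGi
  have hFTC := integral_Ioi_of_hasDerivAt_of_tendsto (hG 0).continuousAt.continuousWithinAt
    (fun y _ => hG y) hgi hG_top
  have hg_integral : ∫ y in Ioi 0, g y = (z ^ 2 + l ^ 2) * besselKMoment 0 l z
      + z * besselKMoment 1 l z - z ^ 2 * besselKMoment 2 l z := by
    rw [integral_sub (f := fun y => (z ^ 2 + l ^ 2) * f 0 y + z * f 1 y)
        (((hfi 0).const_mul _).add ((hfi 1).const_mul _)) ((hfi 2).const_mul _),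
      integral_add ((hfi 0).const_mul _) ((hfi 1).const_mul _), integral_const_mul,
      integral_const_mul, integral_const_mul]
    rfl
  simp only [hg_integral, G, sinh_zero, mul_zero, zero_mul, add_zero, sub_zero] at hFTC
  rw [← besselKMoment_zero]
  linear_combination -hFTC

theorem deriv_deriv_rpow_half_mul_comp_of_bessel_ode {a l : ℝ} (ha : 0 < a) (hl : l = 1 / (2 * a))
    {w w' w'' : ℝ → ℝ} (hw : ∀ z, 0 < z → HasDerivAt w (w' z) z)
    (hw' : ∀ z, 0 < z → HasDerivAt w' (w'' z) z)
    (hode : ∀ z, 0 < z → z ^ 2 * w'' z + z * w' z - (z ^ 2 + l ^ 2) * w z = 0)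
    {t : ℝ} (ht : 0 < t) :
    deriv (deriv fun s => s ^ (1 / 2 : ℝ) * w (s ^ a / a)) t
      = t ^ (2 * a - 2) * (t ^ (1 / 2 : ℝ) * w (t ^ a / a)) := by
  set φ : ℝ → ℝ := fun s => s ^ a / a
  have hφ_pos {s : ℝ} (hs : 0 < s) : 0 < φ s := by positivity
  have hφ {s : ℝ} (hs : 0 < s) : HasDerivAt φ (s ^ (a - 1)) s :=
    ((hasDerivAt_rpow_const (Or.inl hs.ne')).div_const a).congr_deriv (by field_simp)
  set u' : ℝ → ℝ := fun s =>
    1 / 2 * s ^ (1 / 2 - 1 : ℝ) * w (φ s) + s ^ (1 / 2 : ℝ) * (w' (φ s) * s ^ (a - 1))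
  have hu' : deriv (fun s => s ^ (1 / 2 : ℝ) * w (φ s)) =ᶠ[𝓝 t] u' := by
    filter_upwards [Ioi_mem_nhds ht] with s hs
    exact ((hasDerivAt_rpow_const (Or.inl (ne_of_gt hs))).mul
      ((hw _ (hφ_pos hs)).comp s (hφ hs))).deriv
  have hu'' : HasDerivAt u' _ t :=
    ((((hasDerivAt_rpow_const (Or.inl ht.ne')).const_mul (1 / 2 : ℝ)).mul
      ((hw _ (hφ_pos ht)).comp t (hφ ht))).add
      ((hasDerivAt_rpow_const (Or.inl ht.ne')).mul
        (((hw' _ (hφ_pos ht)).comp t (hφ ht)).mul (hasDerivAt_rpow_const (Or.inl ht.ne')))))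
  rw [hu'.deriv_eq, hu''.deriv]
  have hode' := hode _ (hφ_pos ht)
  simp only [φ, hl] at hode' ⊢
  field_simp at hode'
  have h2a : t ^ (2 * a - 2) = (t ^ a) ^ 2 / t ^ 2 := by
    rw [rpow_sub ht, mul_comm, rpow_mul ht.le, rpow_two, rpow_two]
  simp only [rpow_sub_one ht.ne', h2a, Function.comp_apply]
  linear_combination t ^ (1 / 2 : ℝ) / (4 * t ^ 2) * hode'

theorem stmt_13 (m : ℝ) (hm : 0 ≤ m) :
    let lam : ℝ → ℝ := fun t =>
      (1 / (m + 1)) ^ (1 / (2 * (m + 1))) * t ^ ((1 : ℝ) / 2) *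
        besselK (1 / (2 * (m + 1))) (t ^ (m + 1) / (m + 1))
    ∀ t : ℝ, 1 ≤ t → deriv (deriv lam) t - t ^ (2 * m) * lam t = 0 := by
  intro lam t ht
  set c : ℝ := (1 / (m + 1)) ^ (1 / (2 * (m + 1)))
  set l : ℝ := 1 / (2 * (m + 1))
  have hlam : lam = fun s => s ^ (1 / 2 : ℝ) * (c * besselK l (s ^ (m + 1) / (m + 1))) := by
    funext s; simp only [lam]; ring
  have key := deriv_deriv_rpow_half_mul_comp_of_bessel_ode (a := m + 1) (by linarith) rfl
    (w := fun z => c * besselK l z) (w' := fun z => c * -besselKMoment 1 l z)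
    (w'' := fun z => c * besselKMoment 2 l z)
    (fun z hz => (hasDerivAt_besselK l hz).const_mul c)
    (fun z hz => ((hasDerivAt_besselKMoment 1 l hz).neg.const_mul c).congr_deriv (by ring))
    (fun z hz => by linear_combination c * besselK_ode l hz) (by linarith : (0 : ℝ) < t)
  rw [hlam, key, show 2 * (m + 1) - 2 = 2 * m by ring]
  ring
end

section
/- Let m ≥ 0, n ≥ 1, and let δ = 1. If n ≥ 3, then for all μ ≥ 0 the Strauss-type exponent p_S(n + μ/(m+1), m) is strictly greater than the Fujita exponent p_F((m+1)n + (μ-2)/2) = 1 + 2/((m+1)n + μ/2 - 1). Equivalently, [(m+1)n - 2(m+1) - 1]μ² + [2(m+1)³n² + (m+1)²n² - 6(m+1)²n - 2(m+1)n + 6(m+1) - 1]μ + 2(m+1)³n³ - 4(m+1)³n² - 2(m+1)²n² + 8(m+1)²n - 2(m+1)n - 4(m+1) + 2 > 0. -/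
/-!
Write `M = m + 1`, `N = n` and `E = MN + μ/2 - 1`, so that `p_F = (E + 2)/E`. The Strauss exponent
is the larger root of `Q(p) = (MN + μ - 1)p² - (M(N - 2) + μ + 3)p - 2M`, so `p_F < p_S` as soon as
`Q(p_F) < 0`, and clearing denominators gives the identity
`E² Q(p_F) = -(μ(M(N - 2) - 1) + 2(M(N - 2) + 1)(MN - 1))`, which is negative because `M(N - 2) ≥ 1`.
The polynomial is `(M(N - 2) - 1)μ² + (2M((MN)² - 3MN + 3) + (MN - 1)² - 2)μ + 2(MN - 1)²(M(N - 2) + 1)`,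
a quadratic in `μ` with nonnegative coefficients and positive constant term.
-/

open Real

theorem lt_quadratic_root_of_eval_neg {a b c q : ℝ} (ha : 0 < a)
    (hq : a * q ^ 2 - b * q - c < 0) : q < (b + √(b ^ 2 + 4 * a * c)) / (2 * a) := by
  rw [lt_div_iff₀ (by positivity)]
  have hsq : (q * (2 * a) - b) ^ 2 < b ^ 2 + 4 * a * c := by nlinarith
  linarith [Real.lt_sqrt_of_sq_lt hsq]

noncomputable def fujitaExponent (N : ℝ) : ℝ := 1 + 2 / N

/-- `straussExponent M N μ` is the paper's `p_S(N + μ/M, M - 1)`. -/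
noncomputable def straussExponent (M N μ : ℝ) : ℝ :=
  (M * (N - 2) + μ + 3 + √((M * (N - 2) + μ + 3) ^ 2 + 8 * M * (M * N + μ - 1))) /
    (2 * (M * N + μ - 1))

section

variable {M N μ : ℝ}

theorem straussQuadratic_fujitaExponent (hE : M * N + μ / 2 - 1 ≠ 0) :
    (M * N + μ - 1) * fujitaExponent (M * N + μ / 2 - 1) ^ 2 -
        (M * (N - 2) + μ + 3) * fujitaExponent (M * N + μ / 2 - 1) - 2 * M =
      -(μ * (M * (N - 2) - 1) + 2 * (M * (N - 2) + 1) * (M * N - 1)) /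
        (M * N + μ / 2 - 1) ^ 2 := by
  rw [fujitaExponent, eq_div_iff (pow_ne_zero 2 hE)]
  -- eliminate `μ`, so that the only denominator left is `E`
  generalize hE' : M * N + μ / 2 - 1 = E at *
  obtain rfl : μ = 2 * (E - M * N + 1) := by linarith
  field_simp
  ring

theorem fujitaExponent_lt_straussExponent (hM : 1 ≤ M) (hN : 3 ≤ N) (hμ : 0 ≤ μ) :
    fujitaExponent (M * N + μ / 2 - 1) < straussExponent M N μ := by
  have hMN : 1 ≤ M * (N - 2) := by nlinarith
  have hA : 0 < M * N + μ - 1 := by nlinarith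
  have hE : 0 < M * N + μ / 2 - 1 := by nlinarith
  have hQ := straussQuadratic_fujitaExponent hE.ne'
  have hroot := lt_quadratic_root_of_eval_neg (c := 2 * M) hA <| by
    rw [hQ]
    exact div_neg_of_neg_of_pos (by nlinarith) (by positivity)
  rw [straussExponent]
  convert hroot using 4
  ring

theorem strauss_fujita_polynomial_pos (hM : 1 ≤ M) (hN : 3 ≤ N) (hμ : 0 ≤ μ) :
    0 < (M * N - 2 * M - 1) * μ ^ 2 +
      (2 * M ^ 3 * N ^ 2 + M ^ 2 * N ^ 2 - 6 * M ^ 2 * N - 2 * M * N + 6 * M - 1) * μ +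
      2 * M ^ 3 * N ^ 3 - 4 * M ^ 3 * N ^ 2 - 2 * M ^ 2 * N ^ 2 + 8 * M ^ 2 * N - 2 * M * N -
        4 * M + 2 := by
  have hMN : 3 ≤ M * N := by nlinarith
  have hsq : 0 ≤ (M * (N - 2) - 1) * μ ^ 2 := mul_nonneg (by nlinarith) (sq_nonneg μ)
  have hlin : 0 ≤ (2 * M * ((M * N) ^ 2 - 3 * (M * N) + 3) + ((M * N - 1) ^ 2 - 2)) * μ :=
    mul_nonneg (by nlinarith) hμ
  have hconst : 0 < 2 * (M * N - 1) ^ 2 * (M * (N - 2) + 1) := by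
    have : 0 < M * N - 1 := by linarith
    have : 0 < M * (N - 2) + 1 := by nlinarith
    positivity
  linear_combination hsq + hlin + hconst

end

theorem stmt_15 (m : ℝ) (n : ℕ) (hm : 0 ≤ m) (hn : 3 ≤ n) :
    ∀ μ : ℝ, 0 ≤ μ →
      (((m + 1) * ((n : ℝ) - 2) + μ + 3 +
          Real.sqrt (((m + 1) * ((n : ℝ) - 2) + μ + 3) ^ 2 +
            8 * (m + 1) * ((m + 1) * n + μ - 1))) / (2 * ((m + 1) * n + μ - 1)) >
        1 + 2 / ((m + 1) * n + μ / 2 - 1)) ∧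
      (0 < ((m + 1) * (n : ℝ) - 2 * (m + 1) - 1) * μ ^ 2 +
        (2 * (m + 1) ^ 3 * (n : ℝ) ^ 2 + (m + 1) ^ 2 * n ^ 2 - 6 * (m + 1) ^ 2 * n -
          2 * (m + 1) * n + 6 * (m + 1) - 1) * μ +
        2 * (m + 1) ^ 3 * (n : ℝ) ^ 3 - 4 * (m + 1) ^ 3 * n ^ 2 - 2 * (m + 1) ^ 2 * n ^ 2 +
          8 * (m + 1) ^ 2 * n - 2 * (m + 1) * n - 4 * (m + 1) + 2) := by
  intro μ hμ
  have hM : (1 : ℝ) ≤ m + 1 := by linarith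
  have hN : (3 : ℝ) ≤ n := by exact_mod_cast hn
  exact ⟨fujitaExponent_lt_straussExponent hM hN hμ, strauss_fujita_polynomial_pos hM hN hμ⟩
end

section
/- Let m ≥ 0, n ≥ 1, μ ≥ 0, p > 1 and set q = μ(p-1)/2 + (m+1)n(p-1). Suppose F ∈ C²([1,T)) is nonnegative with F(t) ≥ C(t+M) for some C, M > 0 and all t in [T₀, T), and F''(t) ≥ K(t+M)^{-q}F(t)^p for t ≥ T₀. If (p-1)·1 = q - 2 (i.e., p = 1 + 2/((m+1)n + μ/2 - 1)) and C is sufficiently large, then T < ∞. -/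
/-!
Since `F → ∞`, the mean value theorem gives `t₁ > T₀` with `F' t₁ > 0`, and `F'' ≥ 0` keeps `F`
increasing afterwards. Put `ℓ = t₁ + M`. On `[t₁, t₁ + ℓ]` the weight is at least `(2ℓ)^(-q)`, so
`F'' ≥ κ F^p` with `κ = K (2ℓ)^(-q)`, and `F ≥ C ℓ`. Integrating twice between the dyadic points
`u k = t₁ + ℓ - ℓ / 2^k` gives `F (u (k+1)) ≥ (κ ℓ² / 8) F (u k)^p / 4^k`, hence
`F (u k) ≥ C ℓ ρ^k` with `ρ^(p-1) = 4` as soon as `κ ℓ² (C ℓ)^(p-1) ≥ 8 ρ`, contradicting the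
boundedness of `F` on the interval. The relation `(p - 1) · 1 = q - 2` makes
`κ ℓ² (C ℓ)^(p-1) = K 2^(-q) C^(p-1)` independent of `ℓ`, so it suffices that `C` be large.
-/

open Real Set Filter

section Calculus

variable {f f' f'' : ℝ → ℝ} {a b c : ℝ}

theorem add_mul_sub_le_of_hasDerivAt (hab : a ≤ b)
    (hf : ∀ t ∈ Icc a b, HasDerivAt f (f' t) t) (hc : ∀ t ∈ Icc a b, c ≤ f' t) :
    f a + c * (b - a) ≤ f b := by
  have hint : ∀ t ∈ interior (Icc a b), HasDerivAt f (f' t) t :=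
    fun t ht => hf t (interior_subset ht)
  have := (convex_Icc a b).mul_sub_le_image_sub_of_le_deriv
    (fun t ht => (hf t ht).continuousAt.continuousWithinAt)
    (fun t ht => (hint t ht).differentiableAt.differentiableWithinAt)
    (fun t ht => (hint t ht).deriv ▸ hc t (interior_subset ht))
    a (left_mem_Icc.2 hab) b (right_mem_Icc.2 hab) hab
  linarith

theorem add_mul_sq_le_of_hasDerivAt (hab : a ≤ b)
    (hf : ∀ t ∈ Icc a b, HasDerivAt f (f' t) t) (hf' : ∀ t ∈ Icc a b, HasDerivAt f' (f'' t) t)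
    (h₀ : 0 ≤ f' a) (hc : ∀ t ∈ Icc a b, c ≤ f'' t) :
    f a + c * (b - a) ^ 2 / 2 ≤ f b := by
  have hf'_ge (t : ℝ) (ht : t ∈ Icc a b) : c * (t - a) ≤ f' t := by
    have := add_mul_sub_le_of_hasDerivAt ht.1
      (fun s hs => hf' s ⟨hs.1, hs.2.trans ht.2⟩) (fun s hs => hc s ⟨hs.1, hs.2.trans ht.2⟩)
    linarith
  have hsq (t : ℝ) : HasDerivAt (fun t => c * (t - a) ^ 2 / 2) (c * (t - a)) t :=
    ((((hasDerivAt_id' t).sub_const a).fun_pow 2).const_mul c |>.div_const 2).congr_deriv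
      (by norm_num; ring)
  have := add_mul_sub_le_of_hasDerivAt (f := fun t => f t - c * (t - a) ^ 2 / 2) (c := 0) hab
    (fun t ht => (hf t ht).sub (hsq t)) (fun t ht => sub_nonneg.2 (hf'_ge t ht))
  linarith

theorem exists_deriv_pos_of_tendsto_atTop (hcont : ContinuousOn f (Ici a))
    (hf : ∀ t ∈ Ioi a, HasDerivAt f (f' t) t) (htop : Tendsto f atTop atTop) :
    ∃ t, a < t ∧ 0 < f' t := by
  obtain ⟨b, hfb, hab⟩ := ((htop.eventually_gt_atTop (f a)).and (eventually_gt_atTop a)).exists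
  obtain ⟨t, ht, hslope⟩ := exists_hasDerivAt_eq_slope f f' hab
    (hcont.mono Icc_subset_Ici_self) (fun t ht => hf t ht.1)
  exact ⟨t, ht.1, hslope ▸ div_pos (sub_pos.2 hfb) (sub_pos.2 hab)⟩

theorem ContDiffOn.hasDerivAt_and_hasDerivAt_deriv {s : Set ℝ} {t : ℝ}
    (hf : ContDiffOn ℝ 2 f s) (hs : IsOpen s) (ht : t ∈ s) :
    HasDerivAt f (deriv f t) t ∧ HasDerivAt (deriv f) (deriv (deriv f) t) t :=
  ⟨((hf.differentiableOn (by norm_num)).differentiableAt (hs.mem_nhds ht)).hasDerivAt,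
    (((hf.deriv_of_isOpen hs (m := 1) (by norm_num)).differentiableOn (by norm_num)
      ).differentiableAt (hs.mem_nhds ht)).hasDerivAt⟩

end Calculus

theorem tendsto_atTop_of_mul_rpow_div_four_pow_le {x : ℕ → ℝ} {p c g₀ : ℝ} (hp : 1 < p)
    (hg₀ : 0 < g₀) (hx₀ : g₀ ≤ x 0) (hc : 4 ^ (p - 1)⁻¹ ≤ c * g₀ ^ (p - 1))
    (hx : ∀ k, c * x k ^ p / 4 ^ k ≤ x (k + 1)) : Tendsto x atTop atTop := by
  set ρ : ℝ := 4 ^ (p - 1)⁻¹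
  have hρ : 1 < ρ := one_lt_rpow (by norm_num) (inv_pos.2 (by linarith))
  have hρp : ρ ^ (p - 1) = 4 := rpow_inv_rpow (by norm_num) (by linarith)
  have hc₀ : 0 ≤ c := by
    have := (zero_lt_one.trans hρ).trans_le hc
    exact (pos_of_mul_pos_left this (rpow_pos_of_pos hg₀ _).le).le
  have hgrowth (k : ℕ) : g₀ * ρ ^ k ≤ x k := by
    induction k with
    | zero => simpa using hx₀
    | succ k ih =>
      have hxk : 0 < x k := (by positivity : 0 < g₀ * ρ ^ k).trans_le ih
      have hpow : g₀ ^ (p - 1) * 4 ^ k ≤ x k ^ (p - 1) := calc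
        g₀ ^ (p - 1) * 4 ^ k = (g₀ * ρ ^ k) ^ (p - 1) := by
          rw [mul_rpow hg₀.le (by positivity), ← rpow_pow_comm (by positivity), hρp]
        _ ≤ x k ^ (p - 1) := rpow_le_rpow (by positivity) ih (by linarith)
      calc g₀ * ρ ^ (k + 1) = ρ * (g₀ * ρ ^ k) := by ring
        _ ≤ c * g₀ ^ (p - 1) * x k := mul_le_mul hc ih (by positivity) (by positivity)
        _ = c * (g₀ ^ (p - 1) * 4 ^ k) * x k / 4 ^ k := by field_simp
        _ ≤ c * x k ^ (p - 1) * x k / 4 ^ k := by gcongr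
        _ = c * x k ^ p / 4 ^ k := by rw [mul_assoc, ← rpow_add_one hxk.ne', sub_add_cancel]
        _ ≤ x (k + 1) := hx k
  exact tendsto_atTop_mono hgrowth ((tendsto_pow_atTop_atTop_of_one_lt hρ).const_mul_atTop hg₀)

theorem mul_sq_mul_rpow_lt_of_mul_rpow_le_deriv {f f' f'' : ℝ → ℝ} {p κ g₀ a ℓ : ℝ}
    (hp : 1 < p) (hg₀ : 0 < g₀) (hℓ : 0 ≤ ℓ)
    (hf : ∀ t ∈ Icc a (a + ℓ), HasDerivAt f (f' t) t)
    (hf' : ∀ t ∈ Icc a (a + ℓ), HasDerivAt f' (f'' t) t)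
    (h₀ : 0 ≤ f' a) (hlow : ∀ t ∈ Icc a (a + ℓ), g₀ ≤ f t)
    (hode : ∀ t ∈ Icc a (a + ℓ), κ * f t ^ p ≤ f'' t) :
    κ * ℓ ^ 2 * g₀ ^ (p - 1) < 8 * 4 ^ (p - 1)⁻¹ := by
  by_contra! hlarge
  have hκ : 0 ≤ κ := by
    have := (by positivity : (0 : ℝ) < 8 * 4 ^ (p - 1)⁻¹).trans_le hlarge
    exact (pos_of_mul_pos_left (pos_of_mul_pos_left this (by positivity)) (sq_nonneg ℓ)).le
  have hf_nonneg (t : ℝ) (ht : t ∈ Icc a (a + ℓ)) : 0 ≤ f t := hg₀.le.trans (hlow t ht)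
  have hf'_nonneg (t : ℝ) (ht : t ∈ Icc a (a + ℓ)) : 0 ≤ f' t := by
    have := add_mul_sub_le_of_hasDerivAt (c := 0) ht.1
      (fun s hs => hf' s ⟨hs.1, hs.2.trans ht.2⟩)
      (fun s hs => (mul_nonneg hκ (rpow_nonneg (hf_nonneg s ⟨hs.1, hs.2.trans ht.2⟩) p)).trans
        (hode s ⟨hs.1, hs.2.trans ht.2⟩))
    linarith
  have hmono : MonotoneOn f (Icc a (a + ℓ)) := fun s hs t ht hst => by
    have := add_mul_sub_le_of_hasDerivAt (c := 0) hst
      (fun r hr => hf r ⟨hs.1.trans hr.1, hr.2.trans ht.2⟩)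
      (fun r hr => hf'_nonneg r ⟨hs.1.trans hr.1, hr.2.trans ht.2⟩)
    linarith
  set u : ℕ → ℝ := fun k => a + ℓ - ℓ / 2 ^ k
  have hu (k : ℕ) : u k ∈ Icc a (a + ℓ) := by
    have hle : ℓ / 2 ^ k ≤ ℓ := div_le_self hℓ (one_le_pow₀ (by norm_num))
    have hnonneg : 0 ≤ ℓ / 2 ^ k := by positivity
    exact ⟨by linarith, by linarith⟩
  have hu_succ (k : ℕ) : u (k + 1) - u k = ℓ / 2 ^ (k + 1) := by
    simp only [u]; field_simp; ring
  have hstep (k : ℕ) : κ * ℓ ^ 2 / 8 * f (u k) ^ p / 4 ^ k ≤ f (u (k + 1)) := by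
    have hsub : Icc (u k) (u (k + 1)) ⊆ Icc a (a + ℓ) := Icc_subset_Icc (hu k).1 (hu (k + 1)).2
    have hfu := hf_nonneg _ (hu k)
    have := add_mul_sq_le_of_hasDerivAt (c := κ * f (u k) ^ p)
      (by linarith [hu_succ k, div_nonneg hℓ (by positivity : (0 : ℝ) ≤ 2 ^ (k + 1))])
      (fun t ht => hf t (hsub ht)) (fun t ht => hf' t (hsub ht)) (hf'_nonneg _ (hu k))
      (fun t ht => by
        have hft := hmono (hu k) (hsub ht) ht.1
        exact (by gcongr : κ * f (u k) ^ p ≤ κ * f t ^ p).trans (hode t (hsub ht)))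
    rw [hu_succ] at this
    calc κ * ℓ ^ 2 / 8 * f (u k) ^ p / 4 ^ k
        = κ * f (u k) ^ p * (ℓ / 2 ^ (k + 1)) ^ 2 / 2 := by
          rw [show (4 : ℝ) ^ k = (2 ^ k) ^ 2 by rw [← pow_mul, mul_comm, pow_mul]; norm_num]
          field_simp; ring
      _ ≤ f (u k) + κ * f (u k) ^ p * (ℓ / 2 ^ (k + 1)) ^ 2 / 2 := le_add_of_nonneg_left hfu
      _ ≤ f (u (k + 1)) := this
  have htop := tendsto_atTop_of_mul_rpow_div_four_pow_le hp hg₀ (hlow _ (hu 0))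
    (by linarith) hstep
  obtain ⟨k, hk⟩ := (htop.eventually_gt_atTop (f (a + ℓ))).exists
  exact hk.not_ge (hmono (hu k) ⟨by linarith, le_rfl⟩ (hu k).2)

theorem mul_rpow_lt_of_weighted_mul_rpow_le_deriv {f f' f'' : ℝ → ℝ} {p q K C M T₀ : ℝ}
    (hp : 1 < p) (hq : q = p + 1) (hK : 0 < K) (hC : 0 < C) (hT₀M : 0 ≤ T₀ + M)
    (hcont : ContinuousOn f (Ici T₀))
    (hf : ∀ t ∈ Ioi T₀, HasDerivAt f (f' t) t) (hf' : ∀ t ∈ Ioi T₀, HasDerivAt f' (f'' t) t)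
    (hlow : ∀ t ∈ Ici T₀, C * (t + M) ≤ f t)
    (hode : ∀ t ∈ Ici T₀, K * (t + M) ^ (-q) * f t ^ p ≤ f'' t) :
    K * 2 ^ (-q) * C ^ (p - 1) < 8 * 4 ^ (p - 1)⁻¹ := by
  obtain ⟨t₁, ht₁, hf't₁⟩ := exists_deriv_pos_of_tendsto_atTop hcont hf
    (tendsto_atTop_mono' _ ((eventually_ge_atTop T₀).mono hlow)
      ((tendsto_atTop_add_const_right _ M tendsto_id).const_mul_atTop hC))
  set ℓ := t₁ + M
  have hℓ : 0 < ℓ := by linarith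
  have hmem (t : ℝ) (ht : t ∈ Icc t₁ (t₁ + ℓ)) : T₀ < t := ht₁.trans_le ht.1
  have hscale : K * (2 * ℓ) ^ (-q) * ℓ ^ 2 * (C * ℓ) ^ (p - 1) = K * 2 ^ (-q) * C ^ (p - 1) := by
    rw [mul_rpow (by norm_num) hℓ.le, mul_rpow hC.le hℓ.le, ← rpow_natCast]
    have hℓ₁ : ℓ ^ (-q) * ℓ ^ ((2 : ℕ) : ℝ) * ℓ ^ (p - 1) = 1 := by
      rw [← rpow_add hℓ, ← rpow_add hℓ, Nat.cast_ofNat, show -q + 2 + (p - 1) = 0 by linarith,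
        rpow_zero]
    linear_combination K * 2 ^ (-q) * C ^ (p - 1) * hℓ₁
  rw [← hscale]
  refine mul_sq_mul_rpow_lt_of_mul_rpow_le_deriv hp (by positivity) hℓ.le
    (fun t ht => hf t (hmem t ht)) (fun t ht => hf' t (hmem t ht)) hf't₁.le
    (fun t ht => (mul_le_mul_of_nonneg_left (by linarith [ht.1]) hC.le).trans
      (hlow t (hmem t ht).le)) (fun t ht => ?_)
  have htM : 0 < t + M := by linarith [ht.1]
  refine le_trans ?_ (hode t (hmem t ht).le)
  refine mul_le_mul_of_nonneg_right (mul_le_mul_of_nonneg_left ?_ hK.le)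
    (rpow_nonneg ((mul_pos hC htM).le.trans (hlow t (hmem t ht).le)) p)
  exact rpow_le_rpow_of_nonpos htM (by linarith [ht.2]) (by linarith)

theorem stmt_18_general (p q : ℝ) (hp : 1 < p)
    (hcompat : (p - 1) * 1 = q - 2) (K : ℝ) (hK : 0 < K) :
    ∃ c₀ : ℝ, 0 < c₀ ∧
      ∀ (F : ℝ → ℝ) (C M T₀ : ℝ), 0 < C → 0 < M → 1 ≤ T₀ → c₀ ≤ C →
        ContDiffOn ℝ 2 F (Ici 1) →
        (∀ t ∈ Ici (1 : ℝ), 0 ≤ F t) →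
        (∀ t ∈ Ici T₀, C * (t + M) ≤ F t) →
        (∀ t ∈ Ici T₀, K * (t + M) ^ (-q) * F t ^ p ≤ deriv (deriv F) t) →
        False := by
  refine ⟨(8 * 2 ^ q * 4 ^ (p - 1)⁻¹ / K) ^ (p - 1)⁻¹, by positivity, ?_⟩
  intro F C M T₀ hC hM hT₀ hCc₀ hF _ hFl hFd
  have hF' (t : ℝ) (ht : t ∈ Ioi T₀) :=
    (hF.mono Ioi_subset_Ici_self).hasDerivAt_and_hasDerivAt_deriv isOpen_Ioi
      (mem_Ioi.2 (hT₀.trans_lt ht))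
  have hlife := mul_rpow_lt_of_weighted_mul_rpow_le_deriv hp (by linarith) hK hC (by linarith)
    (hF.continuousOn.mono (Ici_subset_Ici.2 hT₀)) (fun t ht => (hF' t ht).1)
    (fun t ht => (hF' t ht).2) hFl hFd
  have hC' := (rpow_inv_le_iff_of_pos (by positivity) hC.le (by linarith)).1 hCc₀
  refine hlife.not_ge ?_
  calc 8 * 4 ^ (p - 1)⁻¹ = K * 2 ^ (-q) * (8 * 2 ^ q * 4 ^ (p - 1)⁻¹ / K) := by
        rw [rpow_neg (by norm_num)]; field_simp
    _ ≤ K * 2 ^ (-q) * C ^ (p - 1) := by gcongr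

theorem stmt_18 (m μ p q : ℝ) (n : ℕ) (hm : 0 ≤ m) (hn : 1 ≤ n) (hμ : 0 ≤ μ) (hp : 1 < p)
    (hq : q = μ * (p - 1) / 2 + (m + 1) * n * (p - 1))
    (hcompat : (p - 1) * 1 = q - 2) (K : ℝ) (hK : 0 < K) :
    ∃ c₀ : ℝ, 0 < c₀ ∧
      ∀ (F : ℝ → ℝ) (C M T₀ : ℝ), 0 < C → 0 < M → 1 ≤ T₀ → c₀ ≤ C →
        ContDiffOn ℝ 2 F (Ici 1) →
        (∀ t ∈ Ici (1 : ℝ), 0 ≤ F t) →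
        (∀ t ∈ Ici T₀, C * (t + M) ≤ F t) →
        (∀ t ∈ Ici T₀, K * (t + M) ^ (-q) * F t ^ p ≤ deriv (deriv F) t) →
        False :=
  stmt_18_general p q hp hcompat K hK
end
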